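/- Let G be a group generated by a finite symmetric set with word length ℓ and H ≤ G a subgroup. Consider the following two conditions: (1) there exist constants M, s > 0 such that for all unit vectors ξ, η ∈ ℓ²(G/H), ∑_{γ∈G} |⟨λ_{G/H}(γ)ξ, η⟩|²/(1+ℓ(γ))^{2s} ≤ M; (2) there exist constants K, D > 0 such that for all unit vectors ξ, η ∈ ℓ²(G/H) and all R ≥ 0, ∑_{γ∈B(R)} |⟨λ_{G/H}(γ)ξ, η⟩|² ≤ K(R+1)^D. Then (1) and (2) are equivalent, and each of them implies both that G has the rapid decay property and that the pair (G,H) has the rapid decay property. -/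

import Mathlib

open scoped BigOperators

attribute [local instance] Classical.propDecidable

section Defs

variable {G : Type*} [Group G]

/-- Word length with respect to a generating set `S`. -/
noncomputable def wordLength (S : Set G) (x : G) : ℕ :=
  sInf {n | ∃ l : List G, (∀ s ∈ l, s ∈ S) ∧ l.length = n ∧ l.prod = x}

/-- Convolution of finitely supported functions:
`(f * ϕ) x = ∑ z, f z * ϕ (z⁻¹ * x)`. -/
noncomputable def conv {k : Type*} [Semiring k] (f ϕ : G →₀ k) : G →₀ k :=
  f.sum fun z c => c • Finsupp.mapDomain (fun x => z * x) ϕ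

/-- `n`-fold convolution power. -/
noncomputable def convPow {k : Type*} [Semiring k] (f : G →₀ k) : ℕ → G →₀ k
  | 0 => Finsupp.single 1 1
  | n + 1 => conv f (convPow f n)

/-- ℓ² norm of a finitely supported function. -/
noncomputable def l2Norm {α k : Type*} [NormedAddCommGroup k] (f : α →₀ k) : ℝ :=
  Real.sqrt (∑ x ∈ f.support, ‖f x‖ ^ 2)

/-- ℓ¹ norm of a finitely supported function. -/
noncomputable def l1Norm {α k : Type*} [NormedAddCommGroup k] (f : α →₀ k) : ℝ :=
  ∑ x ∈ f.support, ‖f x‖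

/-- The hybrid `(2,1)` norm with respect to the subgroup `H`:
`‖f‖_{(2,1)} = sqrt (∑_{gH ∈ G/H} (∑_{x ∈ gH} |f x|)²)`. -/
noncomputable def l21Norm (H : Subgroup G) {k : Type*} [NormedAddCommGroup k]
    (f : G →₀ k) : ℝ :=
  l2Norm (Finsupp.mapDomain (QuotientGroup.mk : G → G ⧸ H) (f.mapRange norm norm_zero))

/-- Hybrid operator norm `‖f‖_h`. -/
noncomputable def hybridOpNorm (H : Subgroup G) (f : G →₀ ℂ) : ℝ :=
  sSup {c : ℝ | ∃ ϕ : G →₀ ℂ, l21Norm H ϕ ≤ 1 ∧ c = l21Norm H (conv f ϕ)}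

/-- Regular operator norm `‖f‖_*`. -/
noncomputable def regOpNorm (f : G →₀ ℂ) : ℝ :=
  sSup {c : ℝ | ∃ ξ : G →₀ ℂ, l2Norm ξ ≤ 1 ∧ c = l2Norm (conv f ξ)}

/-- The quasi-regular representation:
`(λ_{G/H}(f) ξ)(gH) = ∑ z, f z * ξ (z⁻¹ g H)`. -/
noncomputable def quasiReg (H : Subgroup G) (f : G →₀ ℂ) (ξ : (G ⧸ H) →₀ ℂ) :
    (G ⧸ H) →₀ ℂ :=
  f.sum fun z c => c • Finsupp.mapDomain (fun q => z • q) ξ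

/-- Quasi-regular operator norm `‖λ_{G/H}(f)‖`. -/
noncomputable def quasiRegOpNorm (H : Subgroup G) (f : G →₀ ℂ) : ℝ :=
  sSup {c : ℝ | ∃ ξ : (G ⧸ H) →₀ ℂ, l2Norm ξ ≤ 1 ∧ c = l2Norm (quasiReg H f ξ)}

/-- Embed a real finitely supported function into the complex valued ones. -/
noncomputable def toC {α : Type*} (f : α →₀ ℝ) : α →₀ ℂ :=
  f.mapRange Complex.ofReal Complex.ofReal_zero

/-- Pointwise weight of a function by `(1 + ℓ)^s`. -/
noncomputable def weight (S : Set G) (s : ℝ) (f : G →₀ ℂ) : G →₀ ℂ where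
  support := f.support
  toFun x := ((((1 : ℝ) + (wordLength S x : ℝ)) ^ s : ℝ) : ℂ) * f x
  mem_support_toFun x := by
    simp only [Finsupp.mem_support_iff]
    have hpos : (0 : ℝ) < ((1 : ℝ) + (wordLength S x : ℝ)) ^ s :=
      Real.rpow_pos_of_pos (by positivity) s
    constructor
    · intro hf h
      rcases mul_eq_zero.mp h with h1 | h2
      · exact hpos.ne' (by exact_mod_cast h1)
      · exact hf h2
    · intro h hf
      exact h (by rw [hf, mul_zero])

/-- The involution `f⋆ x = f x⁻¹`. -/
noncomputable def starFun {k : Type*} [Zero k] (f : G →₀ k) : G →₀ k :=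
  Finsupp.equivMapDomain (Equiv.inv G) f

/-- Sum of the values of `g` over the subgroup `H`. -/
noncomputable def sumOverSubgroup (H : Subgroup G) (g : G →₀ ℝ) : ℝ :=
  ∑ x ∈ g.support.filter (fun x => x ∈ H), g x

/-- `f` is supported in the ball of radius `R` for the word length of `S`. -/
def supportedInBall (S : Set G) (R : ℕ) {k : Type*} [Zero k] (f : G →₀ k) : Prop :=
  ∀ x ∈ f.support, wordLength S x ≤ R

/-- Rapid decay property for the pair `(G, H)`. -/
def PairRD (S : Set G) (H : Subgroup G) : Prop :=
  ∃ C : ℝ, ∃ D : ℕ, 0 ≤ C ∧ ∀ (R : ℕ) (f ϕ : G →₀ ℂ), supportedInBall S R f →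
    l21Norm H (conv f ϕ) ≤ C * ((R : ℝ) + 1) ^ D * l21Norm H f * l21Norm H ϕ

/-- Rapid decay property for the group `G`. -/
def GroupRD (S : Set G) : Prop :=
  ∃ C : ℝ, ∃ D : ℕ, 0 ≤ C ∧ ∀ (R : ℕ) (f ϕ : G →₀ ℂ), supportedInBall S R f →
    l2Norm (conv f ϕ) ≤ C * ((R : ℝ) + 1) ^ D * l2Norm f * l2Norm ϕ

/-- Polynomial growth of a subgroup for the induced length. -/
def polyGrowthSubgroup (S : Set G) (H : Subgroup G) : Prop :=
  ∃ C : ℝ, ∃ D : ℕ, 0 ≤ C ∧ ∀ R : ℕ,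
    (Set.ncard {x : G | x ∈ H ∧ wordLength S x ≤ R} : ℝ) ≤ C * ((R : ℝ) + 1) ^ D

/-- Polynomial growth of the coset space `G/H`. -/
def polyGrowthQuotient (S : Set G) (H : Subgroup G) : Prop :=
  ∃ C : ℝ, ∃ D : ℕ, 0 ≤ C ∧ ∀ R : ℕ,
    (Set.ncard ((QuotientGroup.mk : G → G ⧸ H) '' {x : G | wordLength S x ≤ R}) : ℝ) ≤
      C * ((R : ℝ) + 1) ^ D

/-- Co-amenability of `H` in `G`: Følner condition for the left action on `G/H`. -/
def Coamenable (H : Subgroup G) : Prop :=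
  ∀ ε : ℝ, 0 < ε → ∀ F : Finset G, ∃ V : Finset (G ⧸ H), V.Nonempty ∧
    ((symmDiff (Finset.image₂ (· • ·) F V) V).card : ℝ) ≤ ε * (V.card : ℝ)

/-- Matrix coefficient `⟨λ_{G/H}(γ) ξ, η⟩` of the quasi-regular representation
on `ℓ²(G/H)`. -/
noncomputable def qrCoeff (H : Subgroup G) (γ : G)
    (ξ η : lp (fun _ : G ⧸ H => ℂ) 2) : ℂ :=
  ∑' q : G ⧸ H, ξ (γ⁻¹ • q) * (starRingEnd ℂ) (η q)

/-- The spectral radius of the random walk induced on `G/H`: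
`ρ = limsup P_{2n}(H,H)^{1/(2n)}`. -/
noncomputable def specRadQuot (H : Subgroup G) (μ : G →₀ ℝ) : ℝ :=
  Filter.limsup (fun n : ℕ =>
    (sumOverSubgroup H (convPow μ (2 * n))) ^ ((1 : ℝ) / (2 * (n : ℝ)))) Filter.atTop

end Defs
/-- Condition (1) of STATEMENT 10: weighted square-summability of the matrix
coefficients of the quasi-regular representation (stated via uniformly bounded
partial sums). -/
def qrCoeffDecay {G : Type*} [Group G] (S : Set G) (H : Subgroup G) : Prop :=
  ∃ M s : ℝ, 0 < M ∧ 0 < s ∧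
    ∀ ξ η : lp (fun _ : G ⧸ H => ℂ) 2, ‖ξ‖ = 1 → ‖η‖ = 1 →
      ∀ F : Finset G,
        ∑ γ ∈ F, ‖qrCoeff H γ ξ η‖ ^ 2 / ((1 : ℝ) + (wordLength S γ : ℝ)) ^ (2 * s)
          ≤ M

/-- Condition (2) of STATEMENT 10: polynomial bound on the square sums of the
matrix coefficients over balls. -/
def qrCoeffPolyBound {G : Type*} [Group G] (S : Set G) (H : Subgroup G) : Prop :=
  ∃ K D : ℝ, 0 < K ∧ 0 < D ∧
    ∀ ξ η : lp (fun _ : G ⧸ H => ℂ) 2, ‖ξ‖ = 1 → ‖η‖ = 1 →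
      ∀ (R : ℕ) (F : Finset G), (∀ γ ∈ F, wordLength S γ ≤ R) →
        ∑ γ ∈ F, ‖qrCoeff H γ ξ η‖ ^ 2 ≤ K * ((R : ℝ) + 1) ^ D

/-!
Both rapid decay estimates come from one inequality. If `∑_{γ ∈ supp f} |⟨λ(γ)ξ, η⟩|² ≤ B`
for unit vectors, then by homogeneity and Cauchy–Schwarz in `γ`,
`∑_z |f z| ⟨λ(z)u, w⟩ ≤ √B ‖f‖₂ ‖u‖ ‖w‖` for nonnegative `u, w ∈ ℓ²(G/H)`. Since
`|(f * ϕ)(x)| ≤ ∑_z |f z| |ϕ (z⁻¹x)|`, taking for `u` and `w` the coset-wise ℓ²-masses of `ϕ`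
and of `f * ϕ` bounds `‖f * ϕ‖₂²` by `√B ‖f‖₂ ‖ϕ‖₂ ‖f * ϕ‖₂`, and taking the coset-wise
ℓ¹-masses bounds `‖f * ϕ‖²_{(2,1)}` by `√B ‖f‖₂ ‖ϕ‖_{(2,1)} ‖f * ϕ‖_{(2,1)}`; finally
`‖f‖₂ ≤ ‖f‖_{(2,1)}`. The two decay conditions are equivalent by comparing weights on the
ball `B(R)`, and in the other direction by splitting into spheres and summing `1/(n+1)²`.
-/

open Finset

lemma le_of_sq_le_mul {x A : ℝ} (hA : 0 ≤ A) (h : x ^ 2 ≤ A * x) : x ≤ A := by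
  nlinarith

lemma sqrt_mul_rpow_le_mul_pow_ceil {K D x : ℝ} (hK : 0 ≤ K) (hD : 0 ≤ D) (hx : 1 ≤ x) :
    √(K * x ^ D) ≤ √K * x ^ ⌈D⌉₊ := by
  rw [Real.sqrt_mul hK]
  gcongr
  calc √(x ^ D) ≤ x ^ D := Real.sqrt_le_self_iff.2 (Or.inr (Real.one_le_rpow hx hD))
    _ ≤ x ^ (⌈D⌉₊ : ℝ) := Real.rpow_le_rpow_of_exponent_le hx (Nat.le_ceil D)
    _ = x ^ ⌈D⌉₊ := Real.rpow_natCast x _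

section WeightedSums

variable {ι : Type*} (ℓ : ι → ℕ) (a : ι → ℝ)

lemma sum_le_rpow_mul_sum_div (ha : ∀ i, 0 ≤ a i) {t : ℝ} (ht : 0 ≤ t) (R : ℕ) (F : Finset ι)
    (hF : ∀ i ∈ F, ℓ i ≤ R) :
    ∑ i ∈ F, a i ≤ ((R : ℝ) + 1) ^ t * ∑ i ∈ F, a i / (1 + (ℓ i : ℝ)) ^ t := by
  rw [mul_sum]
  refine sum_le_sum fun i hi => ?_
  have hpos : 0 < (1 + (ℓ i : ℝ)) ^ t := by positivity
  have hle : (1 + (ℓ i : ℝ)) ^ t ≤ ((R : ℝ) + 1) ^ t := by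
    rw [add_comm]
    gcongr
    exact_mod_cast hF i hi
  calc a i = (1 + (ℓ i : ℝ)) ^ t * (a i / (1 + (ℓ i : ℝ)) ^ t) :=
        (mul_div_cancel₀ _ hpos.ne').symm
    _ ≤ ((R : ℝ) + 1) ^ t * (a i / (1 + (ℓ i : ℝ)) ^ t) := by
        gcongr
        exact div_nonneg (ha i) hpos.le

lemma summable_one_div_nat_add_one_sq : Summable fun n : ℕ => 1 / ((n : ℝ) + 1) ^ 2 := by
  simpa using (summable_nat_add_iff 1).2 (Real.summable_one_div_nat_pow.2 one_lt_two)

/-- Splitting `F` into spheres, the sphere of radius `n` contributes at most `K / (n + 1)²`. -/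
lemma sum_div_rpow_le_mul_tsum {K D : ℝ} (hK : 0 ≤ K)
    (hball : ∀ (n : ℕ) (F : Finset ι), (∀ i ∈ F, ℓ i ≤ n) → ∑ i ∈ F, a i ≤ K * ((n : ℝ) + 1) ^ D)
    (F : Finset ι) :
    ∑ i ∈ F, a i / (1 + (ℓ i : ℝ)) ^ (D + 2) ≤ K * ∑' n : ℕ, 1 / ((n : ℝ) + 1) ^ 2 := by
  have hmaps : ∀ i ∈ F, ℓ i ∈ range (F.sup ℓ + 1) := fun i hi =>
    mem_range.2 (Nat.lt_succ_of_le (le_sup hi))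
  rw [← sum_fiberwise_of_maps_to hmaps]
  have hsphere : ∀ n : ℕ, ∑ i ∈ F with ℓ i = n, a i / (1 + (ℓ i : ℝ)) ^ (D + 2)
      ≤ K * (1 / ((n : ℝ) + 1) ^ 2) := fun n => by
    have hn : (0 : ℝ) < (n : ℝ) + 1 := by positivity
    calc ∑ i ∈ F with ℓ i = n, a i / (1 + (ℓ i : ℝ)) ^ (D + 2)
        = (∑ i ∈ F with ℓ i = n, a i) / ((n : ℝ) + 1) ^ (D + 2) := by
          rw [sum_div]
          refine sum_congr rfl fun i hi => ?_
          rw [(mem_filter.1 hi).2, add_comm]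
      _ ≤ K * ((n : ℝ) + 1) ^ D / ((n : ℝ) + 1) ^ (D + 2) := by
          gcongr
          exact hball n _ fun i hi => (mem_filter.1 hi).2.le
      _ = K * (1 / ((n : ℝ) + 1) ^ 2) := by
          rw [Real.rpow_add hn, Real.rpow_two]
          field_simp
  calc ∑ n ∈ range (F.sup ℓ + 1), ∑ i ∈ F with ℓ i = n, a i / (1 + (ℓ i : ℝ)) ^ (D + 2)
      ≤ ∑ n ∈ range (F.sup ℓ + 1), K * (1 / ((n : ℝ) + 1) ^ 2) := sum_le_sum fun n _ => hsphere n
    _ = K * ∑ n ∈ range (F.sup ℓ + 1), 1 / ((n : ℝ) + 1) ^ 2 := (mul_sum _ _ _).symm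
    _ ≤ K * ∑' n : ℕ, 1 / ((n : ℝ) + 1) ^ 2 := by
      gcongr
      exact summable_one_div_nat_add_one_sq.sum_le_tsum _ fun _ _ => by positivity

end WeightedSums

section L2Norm

variable {α k : Type*} [NormedAddCommGroup k]

lemma l2Norm_nonneg (f : α →₀ k) : 0 ≤ l2Norm f :=
  Real.sqrt_nonneg _

lemma l2Norm_eq_sqrt_sum (f : α →₀ k) {T : Finset α} (hT : f.support ⊆ T) :
    l2Norm f = √(∑ x ∈ T, ‖f x‖ ^ 2) := by
  rw [l2Norm, sum_subset hT fun x _ hx => by simp [Finsupp.notMem_support_iff.1 hx]]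

lemma l2Norm_sq_eq_sum (f : α →₀ k) {T : Finset α} (hT : f.support ⊆ T) :
    l2Norm f ^ 2 = ∑ x ∈ T, ‖f x‖ ^ 2 := by
  rw [l2Norm_eq_sqrt_sum f hT, Real.sq_sqrt (sum_nonneg fun _ _ => sq_nonneg _)]

end L2Norm

lemma Finsupp.mapDomain_apply_eq_sum_filter {α β M : Type*} [AddCommMonoid M] [DecidableEq β]
    (g : α → β) (v : α →₀ M) {T : Finset α} (hT : v.support ⊆ T) (b : β) :
    mapDomain g v b = ∑ a ∈ T with g a = b, v a := by
  rw [sum_filter, ← sum_subset hT fun a _ ha => by simp [notMem_support_iff.1 ha]]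
  simp [mapDomain, Finsupp.sum, single_apply]

section CosetMass

variable {G : Type*} [Group G] (H : Subgroup G)

noncomputable def cosetL1 (ϕ : G →₀ ℂ) : G ⧸ H →₀ ℝ :=
  Finsupp.mapDomain QuotientGroup.mk (ϕ.mapRange norm norm_zero)

noncomputable def cosetL2 (ϕ : G →₀ ℂ) : G ⧸ H →₀ ℝ :=
  (Finsupp.mapDomain QuotientGroup.mk (ϕ.mapRange (‖·‖ ^ 2) (by simp))).mapRange
    Real.sqrt Real.sqrt_zero

variable {H}

lemma l21Norm_eq_l2Norm_cosetL1 (ϕ : G →₀ ℂ) : l21Norm H ϕ = l2Norm (cosetL1 H ϕ) := rfl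

lemma cosetL1_apply (ϕ : G →₀ ℂ) (q : G ⧸ H) :
    cosetL1 H ϕ q = ∑ x ∈ ϕ.support with QuotientGroup.mk x = q, ‖ϕ x‖ :=
  Finsupp.mapDomain_apply_eq_sum_filter _ _ Finsupp.support_mapRange q

lemma cosetL1_nonneg (ϕ : G →₀ ℂ) (q : G ⧸ H) : 0 ≤ cosetL1 H ϕ q := by
  rw [cosetL1_apply]
  exact sum_nonneg fun _ _ => norm_nonneg _

lemma cosetL2_sq_apply (ϕ : G →₀ ℂ) (q : G ⧸ H) :
    cosetL2 H ϕ q ^ 2 = ∑ x ∈ ϕ.support with QuotientGroup.mk x = q, ‖ϕ x‖ ^ 2 := by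
  rw [cosetL2, Finsupp.mapRange_apply,
    Finsupp.mapDomain_apply_eq_sum_filter _ _ Finsupp.support_mapRange q,
    Real.sq_sqrt (sum_nonneg fun x _ => by exact sq_nonneg ‖ϕ x‖)]
  rfl

lemma cosetL2_nonneg (ϕ : G →₀ ℂ) (q : G ⧸ H) : 0 ≤ cosetL2 H ϕ q :=
  Real.sqrt_nonneg _

lemma support_cosetL2_subset (ϕ : G →₀ ℂ) :
    (cosetL2 H ϕ).support ⊆ ϕ.support.image (QuotientGroup.mk : G → G ⧸ H) :=
  Finsupp.support_mapRange.trans <|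
    Finsupp.mapDomain_support.trans (image_subset_image Finsupp.support_mapRange)

lemma l2Norm_cosetL2 (ϕ : G →₀ ℂ) : l2Norm (cosetL2 H ϕ) = l2Norm ϕ := by
  rw [l2Norm_eq_sqrt_sum _ (support_cosetL2_subset ϕ), l2Norm,
    ← sum_fiberwise_of_maps_to (fun x hx => mem_image_of_mem (QuotientGroup.mk : G → G ⧸ H) hx)
      (fun x => ‖ϕ x‖ ^ 2)]
  congr 1
  refine sum_congr rfl fun q _ => ?_
  rw [Real.norm_eq_abs, sq_abs, cosetL2_sq_apply]

lemma l2Norm_le_l21Norm (ϕ : G →₀ ℂ) : l2Norm ϕ ≤ l21Norm H ϕ := by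
  rw [l21Norm_eq_l2Norm_cosetL1, l2Norm_eq_sqrt_sum (cosetL1 H ϕ)
      (Finsupp.mapDomain_support.trans (image_subset_image Finsupp.support_mapRange)), l2Norm,
    ← sum_fiberwise_of_maps_to (fun x hx => mem_image_of_mem (QuotientGroup.mk : G → G ⧸ H) hx)
      (fun x => ‖ϕ x‖ ^ 2)]
  gcongr with q
  rw [Real.norm_eq_abs, sq_abs, cosetL1_apply]
  exact sum_sq_le_sq_sum_of_nonneg fun _ _ => norm_nonneg _

/-- Left translation by `z⁻¹` maps the coset `q` onto the coset `z⁻¹ • q`. -/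
lemma sum_mul_inv_le_mapDomain_mk (v : G →₀ ℝ) (hv : ∀ x, 0 ≤ v x) (z : G) (q : G ⧸ H)
    {T : Finset G} (hT : ∀ x ∈ T, (x : G ⧸ H) = q) :
    ∑ x ∈ T, v (z⁻¹ * x) ≤ Finsupp.mapDomain QuotientGroup.mk v (z⁻¹ • q) := by
  rw [Finsupp.mapDomain_apply_eq_sum_filter _ _ (subset_union_left (s₂ := T.image (z⁻¹ * ·))),
    ← sum_image fun x _ y _ h => mul_left_cancel h]
  refine sum_le_sum_of_subset_of_nonneg (fun y hy => ?_) fun y _ _ => hv y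
  obtain ⟨x, hx, rfl⟩ := mem_image.1 hy
  exact mem_filter.2 ⟨mem_union_right _ hy, by rw [← hT x hx]; rfl⟩

lemma sum_norm_mul_inv_le_cosetL1 (ϕ : G →₀ ℂ) (z : G) (q : G ⧸ H) {T : Finset G}
    (hT : ∀ x ∈ T, (x : G ⧸ H) = q) :
    ∑ x ∈ T, ‖ϕ (z⁻¹ * x)‖ ≤ cosetL1 H ϕ (z⁻¹ • q) :=
  sum_mul_inv_le_mapDomain_mk (ϕ.mapRange norm norm_zero) (fun x => norm_nonneg (ϕ x)) z q hT

lemma sum_norm_sq_mul_inv_le_cosetL2_sq (ϕ : G →₀ ℂ) (z : G) (q : G ⧸ H) {T : Finset G}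
    (hT : ∀ x ∈ T, (x : G ⧸ H) = q) :
    ∑ x ∈ T, ‖ϕ (z⁻¹ * x)‖ ^ 2 ≤ cosetL2 H ϕ (z⁻¹ • q) ^ 2 := by
  have hv : ∀ x, 0 ≤ ϕ.mapRange (‖·‖ ^ 2) (by simp) x := fun _ => sq_nonneg _
  rw [cosetL2, Finsupp.mapRange_apply, Real.sq_sqrt (Finsupp.mapDomain_nonneg hv _)]
  exact sum_mul_inv_le_mapDomain_mk _ hv z q hT

end CosetMass

section Coefficients

noncomputable def finsuppToLp {α : Type*} (u : α →₀ ℝ) : lp (fun _ : α => ℂ) 2 :=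
  ⟨fun a => (u a : ℂ), memℓp_gen <| summable_of_ne_finset_zero (s := u.support) fun a ha => by
    simp [Finsupp.notMem_support_iff.1 ha]⟩

lemma norm_finsuppToLp {α : Type*} (u : α →₀ ℝ) : ‖finsuppToLp u‖ = l2Norm u := by
  rw [lp.norm_eq_tsum_rpow (by norm_num : (0 : ℝ) < (2 : ENNReal).toReal),
    tsum_eq_sum (s := u.support) fun a ha => by
      simp [finsuppToLp, Finsupp.notMem_support_iff.1 ha]]
  simp [finsuppToLp, l2Norm, Real.sqrt_eq_rpow]

variable {G : Type*} [Group G] {H : Subgroup G}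

lemma norm_qrCoeff_smul (γ : G) (a b : ℂ) (ξ η : lp (fun _ : G ⧸ H => ℂ) 2) :
    ‖qrCoeff H γ (a • ξ) (b • η)‖ = ‖a‖ * ‖b‖ * ‖qrCoeff H γ ξ η‖ := by
  have : qrCoeff H γ (a • ξ) (b • η) = a * (starRingEnd ℂ) b * qrCoeff H γ ξ η := by
    simp only [qrCoeff, lp.coeFn_smul, Pi.smul_apply, smul_eq_mul, map_mul, ← tsum_mul_left]
    exact tsum_congr fun q => by ring
  rw [this, norm_mul, norm_mul, RCLike.norm_conj]

lemma norm_qrCoeff_finsuppToLp (z : G) (u w : G ⧸ H →₀ ℝ) (hu : ∀ q, 0 ≤ u q)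
    (hw : ∀ q, 0 ≤ w q) {Q : Finset (G ⧸ H)} (hQ : w.support ⊆ Q) :
    ‖qrCoeff H z (finsuppToLp u) (finsuppToLp w)‖ = ∑ q ∈ Q, u (z⁻¹ • q) * w q := by
  rw [qrCoeff, tsum_eq_sum (s := Q) fun q hq => by
    simp [finsuppToLp, Finsupp.notMem_support_iff.1 fun h => hq (hQ h)]]
  simp only [finsuppToLp, Complex.conj_ofReal, ← Complex.ofReal_mul, ← Complex.ofReal_sum]
  rw [Complex.norm_real, Real.norm_of_nonneg (sum_nonneg fun q _ => mul_nonneg (hu _) (hw q))]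

lemma sum_norm_qrCoeff_sq_le {F : Finset G} {B : ℝ}
    (hB : ∀ ξ η : lp (fun _ : G ⧸ H => ℂ) 2, ‖ξ‖ = 1 → ‖η‖ = 1 →
      ∑ γ ∈ F, ‖qrCoeff H γ ξ η‖ ^ 2 ≤ B)
    (ξ η : lp (fun _ : G ⧸ H => ℂ) 2) :
    ∑ γ ∈ F, ‖qrCoeff H γ ξ η‖ ^ 2 ≤ B * (‖ξ‖ * ‖η‖) ^ 2 := by
  by_cases hξ : ξ = 0
  · simp [hξ, qrCoeff]
  by_cases hη : η = 0
  · simp [hη, qrCoeff]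
  have hunit := hB _ _ (norm_smul_inv_norm (𝕜 := ℂ) hξ) (norm_smul_inv_norm (𝕜 := ℂ) hη)
  simp only [norm_qrCoeff_smul, norm_inv, RCLike.norm_ofReal, abs_norm, mul_pow, ← mul_sum]
    at hunit
  have hξ' : ‖ξ‖ ≠ 0 := norm_ne_zero_iff.2 hξ
  have hη' : ‖η‖ ≠ 0 := norm_ne_zero_iff.2 hη
  calc ∑ γ ∈ F, ‖qrCoeff H γ ξ η‖ ^ 2
      = (‖ξ‖ * ‖η‖) ^ 2 * (‖ξ‖⁻¹ ^ 2 * ‖η‖⁻¹ ^ 2 * ∑ γ ∈ F, ‖qrCoeff H γ ξ η‖ ^ 2) := by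
        field_simp
    _ ≤ B * (‖ξ‖ * ‖η‖) ^ 2 := by rw [mul_comm B]; gcongr

end Coefficients

section Convolution

variable {G : Type*} [Group G] {H : Subgroup G}

lemma sum_norm_mul_norm_qrCoeff_le (f : G →₀ ℂ) {B : ℝ}
    (hB : ∀ ξ η : lp (fun _ : G ⧸ H => ℂ) 2, ‖ξ‖ = 1 → ‖η‖ = 1 →
      ∑ γ ∈ f.support, ‖qrCoeff H γ ξ η‖ ^ 2 ≤ B)
    (ξ η : lp (fun _ : G ⧸ H => ℂ) 2) :
    ∑ z ∈ f.support, ‖f z‖ * ‖qrCoeff H z ξ η‖ ≤ l2Norm f * √B * (‖ξ‖ * ‖η‖) :=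
  calc ∑ z ∈ f.support, ‖f z‖ * ‖qrCoeff H z ξ η‖
      ≤ l2Norm f * √(∑ z ∈ f.support, ‖qrCoeff H z ξ η‖ ^ 2) :=
        Real.sum_mul_le_sqrt_mul_sqrt _ _ _
    _ ≤ l2Norm f * √(B * (‖ξ‖ * ‖η‖) ^ 2) := by
        gcongr
        · exact l2Norm_nonneg f
        · exact sum_norm_qrCoeff_sq_le hB ξ η
    _ = l2Norm f * √B * (‖ξ‖ * ‖η‖) := by
        rw [Real.sqrt_mul' _ (sq_nonneg _), Real.sqrt_sq (by positivity), mul_assoc]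

lemma sum_norm_mul_sum_le (f : G →₀ ℂ) {B : ℝ}
    (hB : ∀ ξ η : lp (fun _ : G ⧸ H => ℂ) 2, ‖ξ‖ = 1 → ‖η‖ = 1 →
      ∑ γ ∈ f.support, ‖qrCoeff H γ ξ η‖ ^ 2 ≤ B)
    (u w : G ⧸ H →₀ ℝ) (hu : ∀ q, 0 ≤ u q) (hw : ∀ q, 0 ≤ w q) {Q : Finset (G ⧸ H)}
    (hQ : w.support ⊆ Q) :
    ∑ z ∈ f.support, ‖f z‖ * ∑ q ∈ Q, u (z⁻¹ • q) * w q
      ≤ l2Norm f * √B * (l2Norm u * l2Norm w) := by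
  simpa only [norm_qrCoeff_finsuppToLp _ u w hu hw hQ, norm_finsuppToLp] using
    sum_norm_mul_norm_qrCoeff_le f hB (finsuppToLp u) (finsuppToLp w)

lemma conv_apply (f ϕ : G →₀ ℂ) (x : G) :
    conv f ϕ x = ∑ z ∈ f.support, f z * ϕ (z⁻¹ * x) := by
  rw [conv, Finsupp.sum_apply, Finsupp.sum]
  refine sum_congr rfl fun z _ => ?_
  rw [Finsupp.smul_apply, smul_eq_mul,
    ← Finsupp.mapDomain_apply (mul_right_injective z) ϕ (z⁻¹ * x), mul_inv_cancel_left]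

lemma norm_conv_apply_le (f ϕ : G →₀ ℂ) (x : G) :
    ‖conv f ϕ x‖ ≤ ∑ z ∈ f.support, ‖f z‖ * ‖ϕ (z⁻¹ * x)‖ := by
  rw [conv_apply]
  exact (norm_sum_le _ _).trans_eq (sum_congr rfl fun _ _ => norm_mul _ _)

lemma cosetL1_conv_le (f ϕ : G →₀ ℂ) (q : G ⧸ H) :
    cosetL1 H (conv f ϕ) q ≤ ∑ z ∈ f.support, ‖f z‖ * cosetL1 H ϕ (z⁻¹ • q) := by
  rw [cosetL1_apply]
  calc ∑ x ∈ (conv f ϕ).support with QuotientGroup.mk x = q, ‖conv f ϕ x‖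
      ≤ ∑ x ∈ (conv f ϕ).support with QuotientGroup.mk x = q,
          ∑ z ∈ f.support, ‖f z‖ * ‖ϕ (z⁻¹ * x)‖ := sum_le_sum fun x _ => norm_conv_apply_le f ϕ x
    _ = ∑ z ∈ f.support, ‖f z‖ *
          ∑ x ∈ (conv f ϕ).support with QuotientGroup.mk x = q, ‖ϕ (z⁻¹ * x)‖ := by
        simp_rw [mul_sum]
        exact sum_comm
    _ ≤ ∑ z ∈ f.support, ‖f z‖ * cosetL1 H ϕ (z⁻¹ • q) := by
        gcongr with z
        exact sum_norm_mul_inv_le_cosetL1 ϕ z q fun x hx => (mem_filter.1 hx).2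

/-- Cauchy–Schwarz inside each coset. -/
lemma sum_norm_mul_inv_mul_le (ϕ ψ : G →₀ ℂ) (z : G) :
    ∑ x ∈ ψ.support, ‖ϕ (z⁻¹ * x)‖ * ‖ψ x‖
      ≤ ∑ q ∈ ψ.support.image (QuotientGroup.mk : G → G ⧸ H),
          cosetL2 H ϕ (z⁻¹ • q) * cosetL2 H ψ q := by
  rw [← sum_fiberwise_of_maps_to fun x hx => mem_image_of_mem (QuotientGroup.mk : G → G ⧸ H) hx]
  refine sum_le_sum fun q _ => (Real.sum_mul_le_sqrt_mul_sqrt _ _ _).trans ?_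
  refine mul_le_mul ?_ ?_ (Real.sqrt_nonneg _) (cosetL2_nonneg ϕ _)
  · rw [← Real.sqrt_sq (cosetL2_nonneg ϕ _)]
    exact Real.sqrt_le_sqrt
      (sum_norm_sq_mul_inv_le_cosetL2_sq ϕ z q fun x hx => (mem_filter.1 hx).2)
  · rw [← cosetL2_sq_apply, Real.sqrt_sq (cosetL2_nonneg ψ q)]

lemma l2Norm_conv_le (f ϕ : G →₀ ℂ) {B : ℝ}
    (hB : ∀ ξ η : lp (fun _ : G ⧸ H => ℂ) 2, ‖ξ‖ = 1 → ‖η‖ = 1 →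
      ∑ γ ∈ f.support, ‖qrCoeff H γ ξ η‖ ^ 2 ≤ B) :
    l2Norm (conv f ϕ) ≤ l2Norm f * √B * l2Norm ϕ := by
  set g := conv f ϕ
  refine le_of_sq_le_mul (mul_nonneg (mul_nonneg (l2Norm_nonneg f) (Real.sqrt_nonneg B))
    (l2Norm_nonneg ϕ)) ?_
  calc l2Norm g ^ 2 = ∑ x ∈ g.support, ‖g x‖ * ‖g x‖ := by
        rw [l2Norm_sq_eq_sum g subset_rfl]
        simp_rw [sq]
    _ ≤ ∑ x ∈ g.support, (∑ z ∈ f.support, ‖f z‖ * ‖ϕ (z⁻¹ * x)‖) * ‖g x‖ := by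
        gcongr with x
        exact norm_conv_apply_le f ϕ x
    _ = ∑ z ∈ f.support, ‖f z‖ * ∑ x ∈ g.support, ‖ϕ (z⁻¹ * x)‖ * ‖g x‖ := by
        simp_rw [sum_mul, mul_sum, mul_assoc]
        exact sum_comm
    _ ≤ ∑ z ∈ f.support, ‖f z‖ * ∑ q ∈ g.support.image (QuotientGroup.mk : G → G ⧸ H),
          cosetL2 H ϕ (z⁻¹ • q) * cosetL2 H g q := by
        gcongr with z
        exact sum_norm_mul_inv_mul_le ϕ g z
    _ ≤ l2Norm f * √B * (l2Norm (cosetL2 H ϕ) * l2Norm (cosetL2 H g)) :=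
        sum_norm_mul_sum_le f hB _ _ (cosetL2_nonneg ϕ) (cosetL2_nonneg g)
          (support_cosetL2_subset g)
    _ = l2Norm f * √B * l2Norm ϕ * l2Norm g := by
        rw [l2Norm_cosetL2, l2Norm_cosetL2]
        ring

lemma l21Norm_conv_le (f ϕ : G →₀ ℂ) {B : ℝ}
    (hB : ∀ ξ η : lp (fun _ : G ⧸ H => ℂ) 2, ‖ξ‖ = 1 → ‖η‖ = 1 →
      ∑ γ ∈ f.support, ‖qrCoeff H γ ξ η‖ ^ 2 ≤ B) :
    l21Norm H (conv f ϕ) ≤ l2Norm f * √B * l21Norm H ϕ := by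
  set g := conv f ϕ
  simp only [l21Norm_eq_l2Norm_cosetL1]
  refine le_of_sq_le_mul (mul_nonneg (mul_nonneg (l2Norm_nonneg f) (Real.sqrt_nonneg B))
    (l2Norm_nonneg _)) ?_
  calc l2Norm (cosetL1 H g) ^ 2 = ∑ q ∈ (cosetL1 H g).support, cosetL1 H g q * cosetL1 H g q := by
        rw [l2Norm_sq_eq_sum _ subset_rfl]
        refine sum_congr rfl fun q _ => ?_
        rw [Real.norm_of_nonneg (cosetL1_nonneg g q), sq]
    _ ≤ ∑ q ∈ (cosetL1 H g).support,
          (∑ z ∈ f.support, ‖f z‖ * cosetL1 H ϕ (z⁻¹ • q)) * cosetL1 H g q := by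
        gcongr with q
        · exact cosetL1_nonneg g q
        · exact cosetL1_conv_le f ϕ q
    _ = ∑ z ∈ f.support, ‖f z‖ * ∑ q ∈ (cosetL1 H g).support,
          cosetL1 H ϕ (z⁻¹ • q) * cosetL1 H g q := by
        simp_rw [sum_mul, mul_sum, mul_assoc]
        exact sum_comm
    _ ≤ l2Norm f * √B * (l2Norm (cosetL1 H ϕ) * l2Norm (cosetL1 H g)) :=
        sum_norm_mul_sum_le f hB _ _ (cosetL1_nonneg ϕ) (cosetL1_nonneg g) subset_rfl
    _ = l2Norm f * √B * l2Norm (cosetL1 H ϕ) * l2Norm (cosetL1 H g) := by ring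

end Convolution

section RapidDecay

variable {G : Type*} [Group G] {S : Set G} {H : Subgroup G}

lemma qrCoeffPolyBound_of_qrCoeffDecay (h : qrCoeffDecay S H) : qrCoeffPolyBound S H := by
  obtain ⟨M, s, hM, hs, hdecay⟩ := h
  refine ⟨M, 2 * s, hM, by positivity, fun ξ η hξ hη R F hF => ?_⟩
  calc ∑ γ ∈ F, ‖qrCoeff H γ ξ η‖ ^ 2
      ≤ ((R : ℝ) + 1) ^ (2 * s) *
          ∑ γ ∈ F, ‖qrCoeff H γ ξ η‖ ^ 2 / (1 + (wordLength S γ : ℝ)) ^ (2 * s) :=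
        sum_le_rpow_mul_sum_div _ _ (fun _ => sq_nonneg _) (by positivity) R F hF
    _ ≤ ((R : ℝ) + 1) ^ (2 * s) * M := by gcongr; exact hdecay ξ η hξ hη F
    _ = M * ((R : ℝ) + 1) ^ (2 * s) := mul_comm _ _

lemma qrCoeffDecay_of_qrCoeffPolyBound (h : qrCoeffPolyBound S H) : qrCoeffDecay S H := by
  obtain ⟨K, D, hK, hD, hball⟩ := h
  refine ⟨K * ∑' n : ℕ, 1 / ((n : ℝ) + 1) ^ 2, (D + 2) / 2,
    mul_pos hK (summable_one_div_nat_add_one_sq.tsum_pos (fun _ => by positivity) 0 (by simp)),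
    by positivity, fun ξ η hξ hη F => ?_⟩
  rw [mul_div_cancel₀ _ two_ne_zero]
  exact sum_div_rpow_le_mul_tsum _ _ hK.le (hball ξ η hξ hη) F

lemma groupRD_of_qrCoeffPolyBound (H : Subgroup G) (h : qrCoeffPolyBound S H) : GroupRD S := by
  obtain ⟨K, D, hK, hD, hball⟩ := h
  refine ⟨√K, ⌈D⌉₊, Real.sqrt_nonneg K, fun R f ϕ hf => ?_⟩
  have hR : (1 : ℝ) ≤ R + 1 := by linarith [(Nat.cast_nonneg R : (0 : ℝ) ≤ R)]
  calc l2Norm (conv f ϕ) ≤ l2Norm f * √(K * ((R : ℝ) + 1) ^ D) * l2Norm ϕ :=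
        l2Norm_conv_le f ϕ fun ξ η hξ hη => hball ξ η hξ hη R f.support hf
    _ ≤ l2Norm f * (√K * ((R : ℝ) + 1) ^ ⌈D⌉₊) * l2Norm ϕ := by
        gcongr
        · exact l2Norm_nonneg ϕ
        · exact l2Norm_nonneg f
        · exact sqrt_mul_rpow_le_mul_pow_ceil hK.le hD.le hR
    _ = √K * ((R : ℝ) + 1) ^ ⌈D⌉₊ * l2Norm f * l2Norm ϕ := by ring

lemma pairRD_of_qrCoeffPolyBound (h : qrCoeffPolyBound S H) : PairRD S H := by
  obtain ⟨K, D, hK, hD, hball⟩ := h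
  refine ⟨√K, ⌈D⌉₊, Real.sqrt_nonneg K, fun R f ϕ hf => ?_⟩
  have hR : (1 : ℝ) ≤ R + 1 := by linarith [(Nat.cast_nonneg R : (0 : ℝ) ≤ R)]
  calc l21Norm H (conv f ϕ) ≤ l2Norm f * √(K * ((R : ℝ) + 1) ^ D) * l21Norm H ϕ :=
        l21Norm_conv_le f ϕ fun ξ η hξ hη => hball ξ η hξ hη R f.support hf
    _ ≤ l21Norm H f * (√K * ((R : ℝ) + 1) ^ ⌈D⌉₊) * l21Norm H ϕ := by
        gcongr
        · exact l2Norm_nonneg _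
        · exact (l2Norm_nonneg f).trans (l2Norm_le_l21Norm f)
        · exact l2Norm_le_l21Norm f
        · exact sqrt_mul_rpow_le_mul_pow_ceil hK.le hD.le hR
    _ = √K * ((R : ℝ) + 1) ^ ⌈D⌉₊ * l21Norm H f * l21Norm H ϕ := by ring

end RapidDecay

theorem statement10_general {G : Type*} [Group G] (S : Set G) (H : Subgroup G) :
    (qrCoeffDecay S H ↔ qrCoeffPolyBound S H) ∧
    (qrCoeffDecay S H → GroupRD S ∧ PairRD S H) ∧
    (qrCoeffPolyBound S H → GroupRD S ∧ PairRD S H) := by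
  have hRD : qrCoeffPolyBound S H → GroupRD S ∧ PairRD S H := fun h =>
    ⟨groupRD_of_qrCoeffPolyBound H h, pairRD_of_qrCoeffPolyBound h⟩
  exact ⟨⟨qrCoeffPolyBound_of_qrCoeffDecay, qrCoeffDecay_of_qrCoeffPolyBound⟩,
    hRD ∘ qrCoeffPolyBound_of_qrCoeffDecay, hRD⟩

/-- the two decay conditions on the coefficients of the
quasi-regular representation are equivalent, and each implies both the rapid
decay property for `G` and for the pair `(G,H)`. -/
theorem statement10 {G : Type*} [Group G] (S : Set G) (hfin : S.Finite)
    (hsym : ∀ s ∈ S, s⁻¹ ∈ S) (hgen : Subgroup.closure S = ⊤) (H : Subgroup G) :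
    (qrCoeffDecay S H ↔ qrCoeffPolyBound S H) ∧
    (qrCoeffDecay S H → GroupRD S ∧ PairRD S H) ∧
    (qrCoeffPolyBound S H → GroupRD S ∧ PairRD S H) :=
  statement10_general S H
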